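/- arXiv:1304.7049 — 4 statements merged into one kernel-verified Lean document; each statement's English description precedes it below -/
import Mathlib

section
/- Let A ∈ ℂ^{m×n} with Moore–Penrose pseudoinverse A†, let S ⊆ {1,…,m}×{1,…,n} be an arbitrary sparsity pattern, and let F(A,S) be the corresponding feasible set. Then there exists X ∈ F(A,S) such that J(X;A) ≤ J(Y;A) for all Y ∈ F(A,S); in other words, the constrained minimization of the misfit J always attains a minimizer. -/
open scoped Matrix

/-- `B` is the Moore–Penrose pseudoinverse of `A`. -/
def IsMPInv {m n : ℕ} (A : Matrix (Fin m) (Fin n) ℂ) (B : Matrix (Fin n) (Fin m) ℂ) : Prop :=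
  A * B * A = A ∧ B * A * B = B ∧ (A * B)ᴴ = A * B ∧ (B * A)ᴴ = B * A

/-- Squared Frobenius norm. -/
noncomputable def frobSq {m n : ℕ} (M : Matrix (Fin m) (Fin n) ℂ) : ℝ :=
  ∑ i, ∑ j, ‖M i j‖ ^ 2

/-- The misfit functional `J(X;A) = ½‖(X-A)A†‖_F² + ½‖A†(X-A)‖_F²`,
with the pseudoinverse `Ad` of `A` given explicitly. -/
noncomputable def Jmis {m n : ℕ} (X A : Matrix (Fin m) (Fin n) ℂ)
    (Ad : Matrix (Fin n) (Fin m) ℂ) : ℝ :=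
  (1 / 2) * frobSq ((X - A) * Ad) + (1 / 2) * frobSq (Ad * (X - A))

/-- The feasible set `F(A,S)`: the null space of `A` is contained in that of `X`,
the null space of `A*` in that of `X*`, and `X` vanishes outside the pattern `S`. -/
def Feasible {m n : ℕ} (A X : Matrix (Fin m) (Fin n) ℂ) (S : Set (Fin m × Fin n)) : Prop :=
  (∀ v : Fin n → ℂ, A.mulVec v = 0 → X.mulVec v = 0) ∧
  (∀ v : Fin m → ℂ, Aᴴ.mulVec v = 0 → Xᴴ.mulVec v = 0) ∧
  (∀ ij : Fin m × Fin n, ij ∉ S → X ij.1 ij.2 = 0)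

section Aux

attribute [local instance] Matrix.frobeniusNormedAddCommGroup Matrix.frobeniusNormedSpace

variable {m n : ℕ}

lemma frobSq_nonneg (M : Matrix (Fin m) (Fin n) ℂ) : 0 ≤ frobSq M := by
  unfold frobSq; positivity

lemma frobSq_eq_sq_norm (M : Matrix (Fin m) (Fin n) ℂ) : frobSq M = ‖M‖ ^ 2 := by
  rw [Matrix.frobenius_norm_def, ← Real.rpow_two, ← Real.rpow_mul (by positivity)]
  norm_num
  unfold frobSq
  norm_num

lemma feas_factor {A X : Matrix (Fin m) (Fin n) ℂ} {Ad : Matrix (Fin n) (Fin m) ℂ}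
    (hA : A * Ad * A = A) (h : ∀ v, A.mulVec v = 0 → X.mulVec v = 0) :
    X = X * Ad * A := by
  have key : ∀ v, X.mulVec v = (X * Ad * A).mulVec v := by
    intro v
    have h0 : A.mulVec (v - (Ad * A).mulVec v) = 0 := by
      rw [Matrix.mulVec_sub, Matrix.mulVec_mulVec, ← Matrix.mul_assoc, hA, sub_self]
    have h1 := h _ h0
    rw [Matrix.mulVec_sub, Matrix.mulVec_mulVec, sub_eq_zero] at h1
    rw [h1, Matrix.mul_assoc]
  ext i j
  have := congrFun (key (Pi.single j 1)) i
  simpa [Matrix.mulVec_single] using this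

/-- The feasible set is closed. -/
lemma feasible_isClosed (A : Matrix (Fin m) (Fin n) ℂ) (S : Set (Fin m × Fin n)) :
    IsClosed {X : Matrix (Fin m) (Fin n) ℂ | Feasible A X S} := by
  have hrw : {X : Matrix (Fin m) (Fin n) ℂ | Feasible A X S} =
      (⋂ v ∈ {v : Fin n → ℂ | A.mulVec v = 0}, {X : Matrix (Fin m) (Fin n) ℂ | X.mulVec v = 0}) ∩
      ((⋂ v ∈ {v : Fin m → ℂ | Aᴴ.mulVec v = 0},
          {X : Matrix (Fin m) (Fin n) ℂ | Xᴴ.mulVec v = 0}) ∩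
        (⋂ ij ∈ {ij : Fin m × Fin n | ij ∉ S},
          {X : Matrix (Fin m) (Fin n) ℂ | X ij.1 ij.2 = 0})) := by
    ext X
    simp only [Set.mem_setOf_eq, Set.mem_inter_iff, Set.mem_iInter, Feasible]
  rw [hrw]
  refine IsClosed.inter (isClosed_biInter fun v _ => ?_)
    (IsClosed.inter (isClosed_biInter fun v _ => ?_) (isClosed_biInter fun ij _ => ?_))
  · let L : Matrix (Fin m) (Fin n) ℂ →ₗ[ℂ] (Fin m → ℂ) :=
      { toFun := fun X => X.mulVec v
        map_add' := fun X Y => Matrix.add_mulVec X Y v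
        map_smul' := fun c X => Matrix.smul_mulVec c X v }
    exact isClosed_eq L.continuous_of_finiteDimensional continuous_const
  · have hset : {X : Matrix (Fin m) (Fin n) ℂ | Xᴴ.mulVec v = 0} =
        {X : Matrix (Fin m) (Fin n) ℂ | (star v) ᵥ* X = 0} := by
      ext X
      simp only [Set.mem_setOf_eq, Matrix.mulVec_conjTranspose]
      constructor
      · intro h
        have := congrArg star h
        simpa using this
      · intro h
        rw [h]; simp
    rw [hset]
    let L : Matrix (Fin m) (Fin n) ℂ →ₗ[ℂ] (Fin n → ℂ) :=
      { toFun := fun X => (star v) ᵥ* X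
        map_add' := fun X Y => Matrix.vecMul_add X Y (star v)
        map_smul' := fun c X => by
          ext j
          simp [Matrix.vecMul, dotProduct, Finset.mul_sum]
          ring_nf
          exact Finset.sum_congr rfl fun k _ => by ring }
    exact isClosed_eq L.continuous_of_finiteDimensional continuous_const
  · let L : Matrix (Fin m) (Fin n) ℂ →ₗ[ℂ] ℂ :=
      { toFun := fun X => X ij.1 ij.2
        map_add' := fun X Y => rfl
        map_smul' := fun c X => rfl }
    exact isClosed_eq L.continuous_of_finiteDimensional continuous_const

lemma jmis_continuous (A : Matrix (Fin m) (Fin n) ℂ) (Ad : Matrix (Fin n) (Fin m) ℂ) :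
    Continuous fun X : Matrix (Fin m) (Fin n) ℂ => Jmis X A Ad := by
  let L1 : Matrix (Fin m) (Fin n) ℂ →ₗ[ℂ] Matrix (Fin m) (Fin m) ℂ :=
    { toFun := fun X => X * Ad
      map_add' := fun X Y => Matrix.add_mul X Y Ad
      map_smul' := fun c X => Matrix.smul_mul c X Ad }
  let L2 : Matrix (Fin m) (Fin n) ℂ →ₗ[ℂ] Matrix (Fin n) (Fin n) ℂ :=
    { toFun := fun X => Ad * X
      map_add' := fun X Y => Matrix.mul_add Ad X Y
      map_smul' := fun c X => Matrix.mul_smul Ad c X }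
  have h1 : Continuous fun X : Matrix (Fin m) (Fin n) ℂ => (X - A) * Ad := by
    have : (fun X : Matrix (Fin m) (Fin n) ℂ => (X - A) * Ad) = fun X => L1 X - A * Ad := by
      ext X i j
      simp [L1, Matrix.sub_mul]
    rw [this]
    exact L1.continuous_of_finiteDimensional.sub continuous_const
  have h2 : Continuous fun X : Matrix (Fin m) (Fin n) ℂ => Ad * (X - A) := by
    have : (fun X : Matrix (Fin m) (Fin n) ℂ => Ad * (X - A)) = fun X => L2 X - Ad * A := by
      ext X i j
      simp [L2, Matrix.mul_sub]
    rw [this]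
    exact L2.continuous_of_finiteDimensional.sub continuous_const
  have : (fun X : Matrix (Fin m) (Fin n) ℂ => Jmis X A Ad) =
      fun X => (1 / 2) * ‖(X - A) * Ad‖ ^ 2 + (1 / 2) * ‖Ad * (X - A)‖ ^ 2 := by
    ext X
    rw [Jmis, frobSq_eq_sq_norm, frobSq_eq_sq_norm]
  rw [this]
  exact (continuous_const.mul ((h1.norm).pow 2)).add
    (continuous_const.mul ((h2.norm).pow 2))

/-- Main existence result with the local frobenius norm instances. -/
lemma stmt3_aux (A : Matrix (Fin m) (Fin n) ℂ) (Ad : Matrix (Fin n) (Fin m) ℂ)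
    (hMP : IsMPInv A Ad) (S : Set (Fin m × Fin n)) :
    ∃ X, Feasible A X S ∧ ∀ Y, Feasible A Y S → Jmis X A Ad ≤ Jmis Y A Ad := by
  haveI : ProperSpace (Matrix (Fin m) (Fin n) ℂ) :=
    FiniteDimensional.proper ℂ (Matrix (Fin m) (Fin n) ℂ)
  set J0 : ℝ := Jmis 0 A Ad with hJ0
  have hJ0nonneg : 0 ≤ J0 := by
    rw [hJ0, Jmis]
    have := frobSq_nonneg ((0 - A) * Ad)
    have := frobSq_nonneg (Ad * (0 - A))
    positivity
  set c : ℝ := ‖A * Ad‖ with hc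
  set s : ℝ := Real.sqrt (2 * J0 + 1) with hs
  have hsnonneg : 0 ≤ s := Real.sqrt_nonneg _
  have hcnonneg : 0 ≤ c := norm_nonneg _
  set R : ℝ := ‖A‖ * (c + s) with hR
  have hRnonneg : 0 ≤ R := by positivity
  -- coercivity: feasible matrices far away have large misfit
  have key : ∀ X : Matrix (Fin m) (Fin n) ℂ, Feasible A X S → R < ‖X‖ → J0 < Jmis X A Ad := by
    intro X hX hRX
    have hfac : X = X * Ad * A := feas_factor hMP.1 hX.1
    have hXn : ‖X‖ ≤ ‖X * Ad‖ * ‖A‖ := by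
      calc ‖X‖ = ‖X * Ad * A‖ := by rw [← hfac]
        _ ≤ ‖X * Ad‖ * ‖A‖ := Matrix.frobenius_norm_mul _ _
    have hApos : 0 < ‖A‖ := by
      by_contra hA
      push_neg at hA
      have h0 : ‖A‖ = 0 := le_antisymm hA (norm_nonneg _)
      have hX0 : ‖X‖ ≤ 0 := by
        calc ‖X‖ ≤ ‖X * Ad‖ * ‖A‖ := hXn
          _ = 0 := by rw [h0, mul_zero]
      linarith
    have h2 : c + s < ‖X * Ad‖ := by
      have : R < ‖X * Ad‖ * ‖A‖ := lt_of_lt_of_le hRX hXn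
      rw [hR] at this
      nlinarith [norm_nonneg (X * Ad)]
    have h3 : s < ‖(X - A) * Ad‖ := by
      have hsub : (X - A) * Ad = X * Ad - A * Ad := Matrix.sub_mul X A Ad
      rw [hsub]
      calc s < ‖X * Ad‖ - c := by linarith
        _ ≤ ‖X * Ad - A * Ad‖ := by
            have := norm_sub_norm_le (X * Ad) (A * Ad)
            rw [← hc] at this
            linarith
    have h4 : 2 * J0 + 1 < ‖(X - A) * Ad‖ ^ 2 := by
      have : s ^ 2 < ‖(X - A) * Ad‖ ^ 2 := by
        have := pow_lt_pow_left₀ h3 hsnonneg (by norm_num : (2:ℕ) ≠ 0)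
        exact this
      rw [hs, Real.sq_sqrt (by linarith)] at this
      exact this
    have h5 : 0 ≤ frobSq (Ad * (X - A)) := frobSq_nonneg _
    rw [Jmis, frobSq_eq_sq_norm]
    nlinarith
  -- minimize over the compact set K
  set K : Set (Matrix (Fin m) (Fin n) ℂ) :=
    {X | Feasible A X S} ∩ Metric.closedBall 0 R with hK
  have hKcompact : IsCompact K :=
    (isCompact_closedBall (0 : Matrix (Fin m) (Fin n) ℂ) R).inter_left
      (feasible_isClosed A S)
  have h0feas : Feasible A 0 S := by
    refine ⟨fun v _ => ?_, fun v _ => ?_, fun ij _ => rfl⟩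
    · simp [Matrix.mulVec]
    · simp [Matrix.mulVec]
  have h0K : (0 : Matrix (Fin m) (Fin n) ℂ) ∈ K := by
    constructor
    · exact h0feas
    · simpa using hRnonneg
  obtain ⟨X0, hX0K, hX0min⟩ := hKcompact.exists_isMinOn ⟨0, h0K⟩
    ((jmis_continuous A Ad).continuousOn)
  refine ⟨X0, hX0K.1, fun Y hY => ?_⟩
  by_cases hYball : ‖Y‖ ≤ R
  · exact hX0min ⟨hY, by simpa using hYball⟩
  · push_neg at hYball
    have h1 : J0 < Jmis Y A Ad := key Y hY hYball
    have h2 : Jmis X0 A Ad ≤ J0 := hX0min h0K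
    linarith

end Aux

/-- the constrained minimization of the misfit `J` over the feasible set
`F(A,S)` always attains a minimizer, for an arbitrary sparsity pattern `S`. -/
theorem stmt3 {m n : ℕ} (A : Matrix (Fin m) (Fin n) ℂ) (Ad : Matrix (Fin n) (Fin m) ℂ)
    (hMP : IsMPInv A Ad) (S : Set (Fin m × Fin n)) :
    ∃ X, Feasible A X S ∧ ∀ Y, Feasible A Y S → Jmis X A Ad ≤ Jmis Y A Ad :=
  stmt3_aux A Ad hMP S
end

section
/- Let A ∈ ℂ^{m×n} have full rank, i.e., rank(A) = min(m,n), let A† be its Moore–Penrose pseudoinverse, let S ⊆ {1,…,m}×{1,…,n} be an arbitrary sparsity pattern, and let F(A,S) be the corresponding feasible set. Then the minimizer of J(·;A) over F(A,S) is globally unique: there is exactly one X ∈ F(A,S) with J(X;A) ≤ J(Y;A) for all Y ∈ F(A,S). -/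
/-!
If `A` has full rank, then `A A† A = A` forces `A A† = 1` (when `m ≤ n`) or `A† A = 1`
(when `n ≤ m`): the idempotent `A A†`, resp. `A† A`, has full rank and is therefore the identity.
Consequently `L X := (X A†, A† X)` is injective, and `J(X;A) = ½ ‖L X - L A‖²`.
The feasible set is a linear subspace `V`, so minimizing `J` over `V` means finding the point of
`L(V)` nearest to `L A`. In a finite-dimensional inner product space that point exists and is
unique, namely the orthogonal projection, and injectivity of `L` carries uniqueness back to `X`.
-/

open scoped Matrix

namespace Matrix

variable {K ι κ : Type*} [Field K] [Fintype ι] [Fintype κ]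

theorem isUnit_of_rank_eq_card [DecidableEq ι] {A : Matrix ι ι K} (h : A.rank = Fintype.card ι) :
    IsUnit A := by
  refine mulVec_surjective_iff_isUnit.1 (LinearMap.range_eq_top (f := A.mulVecLin).1 ?_)
  apply Submodule.eq_top_of_finrank_eq
  rw [← rank, h, Module.finrank_fintype_fun_eq_card]

theorem mul_eq_one_of_mul_mul_eq_self_of_rank_eq_height [DecidableEq ι] {A : Matrix ι κ K}
    {B : Matrix κ ι K} (hABA : A * B * A = A) (h : A.rank = Fintype.card ι) : A * B = 1 := by
  have hidem : IsIdempotentElem (A * B) := by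
    rw [IsIdempotentElem, ← Matrix.mul_assoc, hABA]
  have hrank : (A * B).rank = Fintype.card ι := by
    refine le_antisymm (rank_le_card_height _) ?_
    calc Fintype.card ι = (A * B * A).rank := by rw [hABA, h]
      _ ≤ (A * B).rank := rank_mul_le_left _ _
  exact (IsIdempotentElem.iff_eq_one_of_isUnit (isUnit_of_rank_eq_card hrank)).1 hidem

theorem mul_eq_one_of_mul_mul_eq_self_of_rank_eq_width [DecidableEq κ] {A : Matrix ι κ K}
    {B : Matrix κ ι K} (hABA : A * B * A = A) (h : A.rank = Fintype.card κ) : B * A = 1 := by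
  have hidem : IsIdempotentElem (B * A) := by
    rw [IsIdempotentElem, Matrix.mul_assoc, ← Matrix.mul_assoc A, hABA]
  have hrank : (B * A).rank = Fintype.card κ := by
    refine le_antisymm (rank_le_card_height _) ?_
    calc Fintype.card κ = (A * (B * A)).rank := by rw [← Matrix.mul_assoc, hABA, h]
      _ ≤ (B * A).rank := rank_mul_le_right _ _
  exact (IsIdempotentElem.iff_eq_one_of_isUnit (isUnit_of_rank_eq_card hrank)).1 hidem

theorem mul_eq_one_or_mul_eq_one_of_rank_eq_min {m n : ℕ} {A : Matrix (Fin m) (Fin n) K}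
    {B : Matrix (Fin n) (Fin m) K} (hABA : A * B * A = A) (h : A.rank = min m n) :
    A * B = 1 ∨ B * A = 1 := by
  rcases le_total m n with hmn | hnm
  · exact .inl (mul_eq_one_of_mul_mul_eq_self_of_rank_eq_height hABA
      (by rw [h, min_eq_left hmn, Fintype.card_fin]))
  · exact .inr (mul_eq_one_of_mul_mul_eq_self_of_rank_eq_width hABA
      (by rw [h, min_eq_right hnm, Fintype.card_fin]))

end Matrix

section NearestPoint

variable {𝕜 E F : Type*} [RCLike 𝕜] [AddCommGroup E] [Module 𝕜 E]
  [NormedAddCommGroup F] [InnerProductSpace 𝕜 F]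

theorem Submodule.norm_sub_starProjection_le (K : Submodule 𝕜 F) [K.HasOrthogonalProjection]
    (a : F) {w : F} (hw : w ∈ K) : ‖a - K.starProjection a‖ ≤ ‖a - w‖ := by
  rw [starProjection_minimal]
  exact ciInf_le (show BddBelow (Set.range fun v : K => ‖a - v‖) from
    ⟨0, Set.forall_mem_range.2 fun _ => norm_nonneg _⟩) ⟨w, hw⟩

theorem Submodule.starProjection_eq_of_forall_norm_sub_le (K : Submodule 𝕜 F)
    [K.HasOrthogonalProjection] {a u : F} (hu : u ∈ K) (hmin : ∀ w ∈ K, ‖a - u‖ ≤ ‖a - w‖) :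
    K.starProjection a = u := by
  have hdist : ‖a - u‖ = ⨅ w : K, ‖a - w‖ := by
    refine le_antisymm (le_ciInf fun w => hmin w w.2) ?_
    rw [← starProjection_minimal]
    exact K.norm_sub_starProjection_le a hu
  exact eq_starProjection_of_mem_of_inner_eq_zero hu ((norm_eq_iInf_iff_inner_eq_zero K hu).1 hdist)

theorem Submodule.existsUnique_mem_forall_norm_sub_le_of_injective {L : E →ₗ[𝕜] F}
    (hL : Function.Injective L) (V : Submodule 𝕜 E) [(V.map L).HasOrthogonalProjection] (a : F) :
    ∃! x, x ∈ V ∧ ∀ y ∈ V, ‖a - L x‖ ≤ ‖a - L y‖ := by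
  set K := V.map L
  have hmin_iff : ∀ x ∈ V, (∀ y ∈ V, ‖a - L x‖ ≤ ‖a - L y‖) ↔ K.starProjection a = L x := by
    intro x hx
    refine ⟨fun h => K.starProjection_eq_of_forall_norm_sub_le (mem_map_of_mem hx) ?_,
      fun h y hy => h ▸ K.norm_sub_starProjection_le a (mem_map_of_mem hy)⟩
    rintro _ ⟨y, hy, rfl⟩
    exact h y hy
  obtain ⟨x₀, hx₀, hLx₀⟩ := K.starProjection_apply_mem a
  refine ⟨x₀, ⟨hx₀, (hmin_iff x₀ hx₀).2 hLx₀.symm⟩, fun x ⟨hx, hmin⟩ => hL ?_⟩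
  rw [← (hmin_iff x hx).1 hmin, hLx₀]

end NearestPoint

/-- `X ↦ (X B, B X)`, flattened into one Euclidean space so that `J(X;A)` becomes half a squared
distance there. -/
noncomputable def misfitMap {m n : ℕ} (B : Matrix (Fin n) (Fin m) ℂ) :
    Matrix (Fin m) (Fin n) ℂ →ₗ[ℂ] EuclideanSpace ℂ ((Fin m × Fin m) ⊕ (Fin n × Fin n)) where
  toFun X := WithLp.toLp 2 (Sum.elim (fun p => (X * B) p.1 p.2) (fun p => (B * X) p.1 p.2))
  map_add' X Y := by
    ext (p | p) <;> simp [Matrix.add_mul, Matrix.mul_add]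
  map_smul' c X := by
    ext (p | p) <;> simp [Matrix.smul_mul, Matrix.mul_smul]

section Misfit

variable {m n : ℕ}

theorem norm_misfitMap_sq (B : Matrix (Fin n) (Fin m) ℂ) (M : Matrix (Fin m) (Fin n) ℂ) :
    ‖misfitMap B M‖ ^ 2 = frobSq (M * B) + frobSq (B * M) := by
  rw [EuclideanSpace.norm_eq, Real.sq_sqrt (by positivity), Fintype.sum_sum_type]
  simp [frobSq, Fintype.sum_prod_type, misfitMap]

theorem Jmis_eq (X A : Matrix (Fin m) (Fin n) ℂ) (Ad : Matrix (Fin n) (Fin m) ℂ) :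
    Jmis X A Ad = (1 / 2) * ‖misfitMap Ad A - misfitMap Ad X‖ ^ 2 := by
  rw [norm_sub_rev, ← map_sub, norm_misfitMap_sq, Jmis]
  ring

theorem Jmis_le_Jmis_iff (X Y A : Matrix (Fin m) (Fin n) ℂ) (Ad : Matrix (Fin n) (Fin m) ℂ) :
    Jmis X A Ad ≤ Jmis Y A Ad ↔
      ‖misfitMap Ad A - misfitMap Ad X‖ ≤ ‖misfitMap Ad A - misfitMap Ad Y‖ := by
  rw [Jmis_eq, Jmis_eq, mul_le_mul_iff_right₀ (by norm_num),
    pow_le_pow_iff_left₀ (norm_nonneg _) (norm_nonneg _) two_ne_zero]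

theorem misfitMap_injective {A : Matrix (Fin m) (Fin n) ℂ} {B : Matrix (Fin n) (Fin m) ℂ}
    (h : A * B = 1 ∨ B * A = 1) : Function.Injective (misfitMap B) := by
  refine (injective_iff_map_eq_zero _).2 fun M hM => ?_
  have hMB : M * B = 0 := by
    ext i j
    simpa [misfitMap] using congrFun (congrArg WithLp.ofLp hM) (Sum.inl (i, j))
  have hBM : B * M = 0 := by
    ext i j
    simpa [misfitMap] using congrFun (congrArg WithLp.ofLp hM) (Sum.inr (i, j))
  rcases h with h | h
  · rw [← Matrix.one_mul M, ← h, Matrix.mul_assoc, hBM, Matrix.mul_zero]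
  · rw [← Matrix.mul_one M, ← h, ← Matrix.mul_assoc, hMB, Matrix.zero_mul]

end Misfit

def feasibleSubmodule {m n : ℕ} (A : Matrix (Fin m) (Fin n) ℂ) (S : Set (Fin m × Fin n)) :
    Submodule ℂ (Matrix (Fin m) (Fin n) ℂ) where
  carrier := {X | Feasible A X S}
  add_mem' := by
    rintro X Y ⟨hX₁, hX₂, hX₃⟩ ⟨hY₁, hY₂, hY₃⟩
    refine ⟨fun v hv => ?_, fun v hv => ?_, fun ij hij => ?_⟩
    · rw [Matrix.add_mulVec, hX₁ v hv, hY₁ v hv, add_zero]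
    · rw [Matrix.conjTranspose_add, Matrix.add_mulVec, hX₂ v hv, hY₂ v hv, add_zero]
    · rw [Matrix.add_apply, hX₃ ij hij, hY₃ ij hij, add_zero]
  zero_mem' := ⟨fun _ _ => Matrix.zero_mulVec _, fun v _ => by simp, fun _ _ => rfl⟩
  smul_mem' := by
    rintro c X ⟨hX₁, hX₂, hX₃⟩
    refine ⟨fun v hv => ?_, fun v hv => ?_, fun ij hij => ?_⟩
    · rw [Matrix.smul_mulVec, hX₁ v hv, smul_zero]
    · rw [Matrix.conjTranspose_smul, Matrix.smul_mulVec, hX₂ v hv, smul_zero]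
    · rw [Matrix.smul_apply, hX₃ ij hij, smul_zero]

@[simp]
theorem mem_feasibleSubmodule {m n : ℕ} {A X : Matrix (Fin m) (Fin n) ℂ}
    {S : Set (Fin m × Fin n)} : X ∈ feasibleSubmodule A S ↔ Feasible A X S :=
  Iff.rfl

/-- if `A` has full rank, the minimizer of `J(·;A)` over the feasible set
`F(A,S)` is globally unique, for an arbitrary sparsity pattern `S`. -/
theorem stmt4 {m n : ℕ} (A : Matrix (Fin m) (Fin n) ℂ) (Ad : Matrix (Fin n) (Fin m) ℂ)
    (hMP : IsMPInv A Ad) (hrank : A.rank = min m n) (S : Set (Fin m × Fin n)) :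
    ∃! X, Feasible A X S ∧ ∀ Y, Feasible A Y S → Jmis X A Ad ≤ Jmis Y A Ad := by
  have hinj : Function.Injective (misfitMap Ad) :=
    misfitMap_injective (Matrix.mul_eq_one_or_mul_eq_one_of_rank_eq_min hMP.1 hrank)
  simpa only [mem_feasibleSubmodule, Jmis_le_Jmis_iff] using
    (feasibleSubmodule A S).existsUnique_mem_forall_norm_sub_le_of_injective hinj (misfitMap Ad A)
end

section
/- Let A, B ∈ ℂ^{m×n}, p ∈ [1,∞], q ∈ [0,1]. Suppose that for every row index i, ‖A(i,:) − B(i,:)‖_p ≤ (1−q) ‖A(i,:)‖_p, and for every column index j, ‖A(:,j) − B(:,j)‖_p ≤ (1−q) ‖A(:,j)‖_p, where ‖·‖_p is the vector ℓ_p norm. Then ‖A − B‖₂ ≤ (mn)^{C/2} (1−q) ‖A‖₂, where ‖·‖₂ denotes the spectral norm (largest singular value) and C := 1 − 1/p + |1/2 − 1/p|. -/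
/-!
The spectral norm is bounded by the Schur test: `‖M‖₂² ≤ (max_i ∑_j |M i j|) (max_j ∑_i |M i j|)`.
For a row `x` of `A` and the row `y` of `B` at the same index, Hölder's inequality gives
`‖x - y‖₁ ≤ n^(1-1/p) ‖x - y‖_p ≤ n^(1-1/p) (1-q) ‖x‖_p`, and comparing ℓ_p with ℓ₂ gives
`‖x‖_p ≤ n^max(0, 1/p-1/2) ‖x‖₂ ≤ n^max(0, 1/p-1/2) ‖A‖₂`, because no row of a matrix is longer
than its spectral norm. Columns are treated alike, and the Schur test yields the bound with the
exponent `1 - 1/p + max(0, 1/p - 1/2) ≤ C`.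
-/

open scoped Matrix ENNReal

/-- The spectral norm (largest singular value): the operator norm of the matrix as a map
between Euclidean spaces. -/
noncomputable def specNorm {m n : ℕ} (M : Matrix (Fin m) (Fin n) ℂ) : ℝ :=
  ‖LinearMap.toContinuousLinearMap (Matrix.toEuclideanLin M)‖

/-- The vector ℓ_p norm. -/
noncomputable def lpnorm (p : ℝ≥0∞) [Fact (1 ≤ p)] {k : ℕ} (x : Fin k → ℂ) : ℝ :=
  ‖(WithLp.equiv p (Fin k → ℂ)).symm x‖

open WithLp

lemma ENNReal.one_le_toReal {p : ℝ≥0∞} (h1 : 1 ≤ p) (hp : p ≠ ∞) : 1 ≤ p.toReal := by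
  simpa using ENNReal.toReal_mono hp h1

lemma ENNReal.toReal_one_div_le_one {p : ℝ≥0∞} (hp : 1 ≤ p) : (1 / p).toReal ≤ 1 := by
  simpa using ENNReal.toReal_mono ENNReal.one_ne_top (ENNReal.inv_le_one.2 hp)

namespace PiLp

variable {ι : Type*} [Fintype ι] {β : ι → Type*} [∀ i, SeminormedAddCommGroup (β i)]

lemma norm_toLp_rpow_eq_sum {p : ℝ≥0∞} (hp : 0 < p.toReal) (x : ∀ i, β i) :
    ‖toLp p x‖ ^ p.toReal = ∑ i, ‖x i‖ ^ p.toReal := by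
  rw [norm_eq_sum hp, ← Real.rpow_mul (by positivity), one_div_mul_cancel hp.ne', Real.rpow_one]

lemma norm_toLp_le_card_rpow_mul_norm_toLp {p r : ℝ≥0∞} [Fact (1 ≤ p)] [Fact (1 ≤ r)]
    (hpr : p ≤ r) (x : ∀ i, β i) :
    ‖toLp p x‖ ≤ (Fintype.card ι : ℝ) ^ ((1 / p).toReal - (1 / r).toReal) * ‖toLp r x‖ := by
  rcases eq_or_ne r ∞ with rfl | hr
  · simpa using (lipschitzWith_toLp p β).norm_le_mul rfl x
  have ha : 1 ≤ p.toReal := ENNReal.one_le_toReal Fact.out (ne_top_of_le_ne_top hr hpr)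
  have hab : p.toReal ≤ r.toReal := ENNReal.toReal_mono hr hpr
  have hb : 0 < r.toReal := by linarith
  -- Hölder with exponent `r / p` applied to the family `‖x i‖ ^ p`
  have holder := Real.inner_le_weight_mul_Lp_of_nonneg Finset.univ
    ((one_le_div (by linarith)).2 hab) (fun _ => 1) (fun i => ‖x i‖ ^ p.toReal)
    (fun _ => zero_le_one) (fun _ => by positivity)
  have hpow : ∀ i, (‖x i‖ ^ p.toReal) ^ (r.toReal / p.toReal) = ‖x i‖ ^ r.toReal := fun i => by
    rw [← Real.rpow_mul (norm_nonneg _), mul_div_cancel₀ _ (by positivity)]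
  simp only [one_mul, Finset.sum_const, Finset.card_univ, nsmul_eq_mul, mul_one, hpow,
    inv_div] at holder
  rw [← norm_toLp_rpow_eq_sum (by positivity), ← norm_toLp_rpow_eq_sum hb,
    ← Real.rpow_mul (norm_nonneg _), mul_div_cancel₀ _ hb.ne'] at holder
  rw [← Real.rpow_le_rpow_iff (norm_nonneg _) (by positivity) (by positivity : 0 < p.toReal),
    Real.mul_rpow (by positivity) (norm_nonneg _), ← Real.rpow_mul (by positivity),
    ENNReal.toReal_div, ENNReal.toReal_div]
  convert holder using 3
  simp only [ENNReal.toReal_one]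
  field_simp

lemma norm_toLp_le_norm_toLp_of_le {p r : ℝ≥0∞} [Fact (1 ≤ p)] [Fact (1 ≤ r)]
    (hpr : p ≤ r) (x : ∀ i, β i) : ‖toLp r x‖ ≤ ‖toLp p x‖ := by
  have hcoord : ∀ i, ‖x i‖ ≤ ‖toLp p x‖ := norm_apply_le (toLp p x)
  rcases eq_or_ne r ∞ with rfl | hr
  · simpa [pi_norm_le_iff_of_nonneg (norm_nonneg _)] using hcoord
  have ha : 1 ≤ p.toReal := ENNReal.one_le_toReal Fact.out (ne_top_of_le_ne_top hr hpr)
  have hab : p.toReal ≤ r.toReal := ENNReal.toReal_mono hr hpr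
  have hb : 0 < r.toReal := by linarith
  have hsplit : ∀ y : ℝ, 0 ≤ y → y ^ r.toReal = y ^ p.toReal * y ^ (r.toReal - p.toReal) :=
    fun y hy => by rw [← Real.rpow_add' hy (by linarith), add_sub_cancel]
  -- `‖x i‖ ^ r ≤ ‖x i‖ ^ p * ‖x‖ₚ ^ (r - p)`, and the right-hand sides sum to `‖x‖ₚ ^ r`
  rw [← Real.rpow_le_rpow_iff (norm_nonneg _) (norm_nonneg _) hb, norm_toLp_rpow_eq_sum hb,
    hsplit _ (norm_nonneg _), norm_toLp_rpow_eq_sum (by linarith), Finset.sum_mul]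
  gcongr with i
  rw [hsplit _ (norm_nonneg _)]
  gcongr
  exact hcoord i

lemma norm_toLp_le_card_rpow_mul_norm_toLp_two {p : ℝ≥0∞} [Fact (1 ≤ p)] (x : ∀ i, β i) :
    ‖toLp p x‖ ≤ (Fintype.card ι : ℝ) ^ max 0 ((1 / p).toReal - 1 / 2) * ‖toLp 2 x‖ := by
  rcases isEmpty_or_nonempty ι with hι | hι
  · simp [Subsingleton.elim x 0]
  have hcard : (1 : ℝ) ≤ Fintype.card ι := by exact_mod_cast Fintype.card_pos
  rcases le_total p 2 with hp2 | h2p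
  · refine (norm_toLp_le_card_rpow_mul_norm_toLp hp2 x).trans ?_
    exact mul_le_mul_of_nonneg_right (Real.rpow_le_rpow_of_exponent_le hcard (by simp))
      (norm_nonneg _)
  · exact (norm_toLp_le_norm_toLp_of_le h2p x).trans
      (le_mul_of_one_le_left (norm_nonneg _) (Real.one_le_rpow hcard (le_max_left _ _)))

lemma sum_norm_sub_le_of_norm_toLp_sub_le {p : ℝ≥0∞} [Fact (1 ≤ p)] {c : ℝ} (hc : 0 ≤ c)
    {x y : ∀ i, β i} (h : ‖toLp p (x - y)‖ ≤ c * ‖toLp p x‖) :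
    ∑ i, ‖x i - y i‖ ≤ (Fintype.card ι : ℝ) ^ (1 - (1 / p).toReal + max 0 ((1 / p).toReal - 1 / 2))
      * c * ‖toLp 2 x‖ := by
  have ht : (1 / p).toReal ≤ 1 := ENNReal.toReal_one_div_le_one (Fact.out : 1 ≤ p)
  have hl1 : ∑ i, ‖x i - y i‖ = ‖toLp 1 (x - y)‖ := by
    simp only [norm_eq_sum (by simp : 0 < (1 : ℝ≥0∞).toReal), ENNReal.toReal_one, Real.rpow_one,
      div_one]
    rfl
  calc ∑ i, ‖x i - y i‖ = ‖toLp 1 (x - y)‖ := hl1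
    _ ≤ (Fintype.card ι : ℝ) ^ (1 - (1 / p).toReal) * ‖toLp p (x - y)‖ := by
      simpa using norm_toLp_le_card_rpow_mul_norm_toLp (Fact.out : 1 ≤ p) (x - y)
    _ ≤ (Fintype.card ι : ℝ) ^ (1 - (1 / p).toReal) * (c *
        ((Fintype.card ι : ℝ) ^ max 0 ((1 / p).toReal - 1 / 2) * ‖toLp 2 x‖)) := by
      gcongr
      exact h.trans (by gcongr; exact norm_toLp_le_card_rpow_mul_norm_toLp_two x)
    _ = _ := by
      rw [Real.rpow_add_of_nonneg (Nat.cast_nonneg _) (by linarith) (le_max_left _ _)]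
      ring

end PiLp

namespace Matrix

open scoped Matrix.Norms.L2Operator

variable {𝕜 : Type*} [RCLike 𝕜] {m n : Type*} [Fintype n]

lemma norm_mulVec_apply_sq_le (A : Matrix m n 𝕜) (v : n → 𝕜) (i : m) :
    ‖(A *ᵥ v) i‖ ^ 2 ≤ (∑ j, ‖A i j‖) * ∑ j, ‖A i j‖ * ‖v j‖ ^ 2 := by
  have htri : ‖(A *ᵥ v) i‖ ≤ ∑ j, ‖A i j‖ * ‖v j‖ := by
    simpa only [mulVec, dotProduct, norm_mul] using norm_sum_le Finset.univ fun j => A i j * v j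
  calc ‖(A *ᵥ v) i‖ ^ 2 ≤ (∑ j, ‖A i j‖ * ‖v j‖) ^ 2 := by gcongr
    _ ≤ (∑ j, ‖A i j‖) * ∑ j, ‖A i j‖ * ‖v j‖ ^ 2 :=
      Finset.sum_sq_le_sum_mul_sum_of_sq_le_mul _ (fun _ _ => by positivity)
        (fun _ _ => by positivity) fun _ _ => le_of_eq (by ring)

variable [Fintype m] [DecidableEq n]

lemma norm_toLp_col_le_l2_opNorm (A : Matrix m n 𝕜) (j : n) : ‖toLp 2 (A.col j)‖ ≤ ‖A‖ := by
  have h := A.l2_opNorm_mulVec (PiLp.single 2 j 1)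
  rw [PiLp.norm_single, norm_one, mul_one, PiLp.ofLp_single, mulVec_single_one] at h
  exact h

lemma norm_toLp_row_le_l2_opNorm [DecidableEq m] (A : Matrix m n 𝕜) (i : m) :
    ‖toLp 2 (A.row i)‖ ≤ ‖A‖ := by
  have h := norm_toLp_col_le_l2_opNorm Aᴴ i
  rw [l2_opNorm_conjTranspose] at h
  simpa [EuclideanSpace.norm_eq] using h

/-- **Schur test**. -/
lemma l2_opNorm_le_sqrt_mul_of_sum_norm_le (A : Matrix m n 𝕜) {r s : ℝ} (hr : 0 ≤ r)
    (hs : 0 ≤ s) (hrow : ∀ i, ∑ j, ‖A i j‖ ≤ r) (hcol : ∀ j, ∑ i, ‖A i j‖ ≤ s) :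
    ‖A‖ ≤ √(r * s) := by
  rw [l2_opNorm_def]
  refine ContinuousLinearMap.opNorm_le_bound _ (Real.sqrt_nonneg _) fun x => ?_
  rw [← pow_le_pow_iff_left₀ (norm_nonneg _) (by positivity) two_ne_zero, mul_pow,
    Real.sq_sqrt (by positivity), EuclideanSpace.norm_sq_eq, EuclideanSpace.norm_sq_eq]
  calc ∑ i, ‖(A *ᵥ ofLp x) i‖ ^ 2
      ≤ ∑ i, (∑ j, ‖A i j‖) * ∑ j, ‖A i j‖ * ‖x j‖ ^ 2 :=
        Finset.sum_le_sum fun i _ => A.norm_mulVec_apply_sq_le _ i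
    _ ≤ ∑ i, r * ∑ j, ‖A i j‖ * ‖x j‖ ^ 2 := by gcongr with i; exact hrow i
    _ = r * ∑ j, (∑ i, ‖A i j‖) * ‖x j‖ ^ 2 := by
        simp only [← Finset.mul_sum, Finset.sum_mul]
        rw [Finset.sum_comm]
    _ ≤ r * ∑ j, s * ‖x j‖ ^ 2 := by gcongr with j; exact hcol j
    _ = r * s * ∑ j, ‖x j‖ ^ 2 := by rw [← Finset.mul_sum, mul_assoc]

end Matrix

open scoped Matrix.Norms.L2Operator

lemma specNorm_eq_l2_opNorm {m n : ℕ} (M : Matrix (Fin m) (Fin n) ℂ) : specNorm M = ‖M‖ := rfl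

lemma Real.sqrt_natCast_rpow_mul_le {m n : ℕ} {e C K : ℝ} (he : 0 < e) (heC : e ≤ C)
    (hK : 0 ≤ K) : √((n : ℝ) ^ e * K * ((m : ℝ) ^ e * K)) ≤ ((m : ℝ) * n) ^ (C / 2) * K := by
  have hpow : ((m : ℝ) * n) ^ e ≤ ((m : ℝ) * n) ^ C := by
    rcases Nat.eq_zero_or_pos (m * n) with h | h
    · rw [show ((m : ℝ) * n) = 0 by exact_mod_cast h, Real.zero_rpow he.ne']
      positivity
    · exact Real.rpow_le_rpow_of_exponent_le (by exact_mod_cast h) heC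
  refine Real.sqrt_le_iff.2 ⟨by positivity, ?_⟩
  calc (n : ℝ) ^ e * K * ((m : ℝ) ^ e * K) = ((m : ℝ) * n) ^ e * K ^ 2 := by
        rw [Real.mul_rpow (by positivity) (by positivity)]; ring
    _ ≤ ((m : ℝ) * n) ^ C * K ^ 2 := by gcongr
    _ = (((m : ℝ) * n) ^ (C / 2) * K) ^ 2 := by
      rw [mul_pow, ← Real.rpow_mul_natCast (by positivity), Nat.cast_ofNat,
        div_mul_cancel₀ _ two_ne_zero]

theorem stmt7_general {m n : ℕ} (A B : Matrix (Fin m) (Fin n) ℂ)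
    (p : ℝ≥0∞) [Fact (1 ≤ p)] (q : ℝ) (hq1 : q ≤ 1)
    (hrow : ∀ i : Fin m,
      lpnorm p (fun j => A i j - B i j) ≤ (1 - q) * lpnorm p (fun j => A i j))
    (hcol : ∀ j : Fin n,
      lpnorm p (fun i => A i j - B i j) ≤ (1 - q) * lpnorm p (fun i => A i j)) :
    specNorm (A - B) ≤
      ((m : ℝ) * n) ^ ((1 - (1 / p).toReal + |1 / 2 - (1 / p).toReal|) / 2)
        * (1 - q) * specNorm A := by
  rw [specNorm_eq_l2_opNorm, specNorm_eq_l2_opNorm, mul_assoc _ (1 - q)]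
  set t := (1 / p).toReal
  have ht : t ≤ 1 := ENNReal.toReal_one_div_le_one Fact.out
  have hq : 0 ≤ 1 - q := by linarith
  have hsum : ∀ {k : ℕ} (x y : Fin k → ℂ), lpnorm p (x - y) ≤ (1 - q) * lpnorm p x →
      ‖toLp 2 x‖ ≤ ‖A‖ →
      ∑ i, ‖x i - y i‖ ≤ (k : ℝ) ^ (1 - t + max 0 (t - 1 / 2)) * ((1 - q) * ‖A‖) :=
    fun x y hxy hx => by
      have h := PiLp.sum_norm_sub_le_of_norm_toLp_sub_le hq hxy
      rw [Fintype.card_fin, mul_assoc] at h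
      exact h.trans (by gcongr)
  calc ‖A - B‖
      ≤ √((n : ℝ) ^ (1 - t + max 0 (t - 1 / 2)) * ((1 - q) * ‖A‖) *
          ((m : ℝ) ^ (1 - t + max 0 (t - 1 / 2)) * ((1 - q) * ‖A‖))) :=
        Matrix.l2_opNorm_le_sqrt_mul_of_sum_norm_le _ (by positivity) (by positivity)
          (fun i => hsum _ _ (hrow i) (A.norm_toLp_row_le_l2_opNorm i))
          (fun j => hsum _ _ (hcol j) (A.norm_toLp_col_le_l2_opNorm j))
    _ ≤ _ := Real.sqrt_natCast_rpow_mul_le (by linarith [le_max_right 0 (t - 1 / 2)])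
        (by gcongr; exact max_le (abs_nonneg _) (by linarith [neg_le_abs (1 / 2 - t)]))
        (by positivity)

/-- if every row and every column of `B` approximates that of `A` to within a
factor `1 - q` in the ℓ_p norm, then `‖A - B‖₂ ≤ (mn)^{C/2} (1-q) ‖A‖₂` where
`C = 1 - 1/p + |1/2 - 1/p|`. -/
theorem stmt7 {m n : ℕ} (A B : Matrix (Fin m) (Fin n) ℂ)
    (p : ℝ≥0∞) [Fact (1 ≤ p)] (q : ℝ) (hq0 : 0 ≤ q) (hq1 : q ≤ 1)
    (hrow : ∀ i : Fin m,
      lpnorm p (fun j => A i j - B i j) ≤ (1 - q) * lpnorm p (fun j => A i j))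
    (hcol : ∀ j : Fin n,
      lpnorm p (fun i => A i j - B i j) ≤ (1 - q) * lpnorm p (fun i => A i j)) :
    specNorm (A - B) ≤
      ((m : ℝ) * n) ^ ((1 - (1 / p).toReal + |1 / 2 - (1 / p).toReal|) / 2)
        * (1 - q) * specNorm A :=
  stmt7_general A B p q hq1 hrow hcol
end

section
/- Let A, X ∈ ℂ^{m×n}, let α ∈ ℂ with |α| = 1, and let P and Q be complex permutation matrices of compatible sizes. Then the misfit is invariant in each of the following three cases: (i) J(α P X Q; α P A Q) = J(X;A) with P ∈ ℂ^{m×m}, Q ∈ ℂ^{n×n}; (ii) J(α P X* Q; α P A* Q) = J(X;A) with P ∈ ℂ^{n×n}, Q ∈ ℂ^{m×m}; (iii) J(α P Xᵀ Q; α P Aᵀ Q) = J(X;A) with P ∈ ℂ^{n×n}, Q ∈ ℂ^{m×m}. -/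
open scoped Matrix

/-- A complex permutation matrix: exactly one nonzero entry in each row and column,
each of modulus 1. -/
def IsComplexPerm {k : ℕ} (P : Matrix (Fin k) (Fin k) ℂ) : Prop :=
  ∃ (π : Equiv.Perm (Fin k)) (d : Fin k → ℂ),
    (∀ i, ‖d i‖ = 1) ∧ P = Matrix.of fun i j => if j = π i then d i else 0

/-! A unit scalar times a complex permutation matrix is unitary, and for an isometry `U` and a
co-isometry `V` the pseudoinverse of `U A V` is `V* A† U*`. Hence both residuals in `J` are only
conjugated by unitaries, which preserve the Frobenius norm, while (conjugate) transposition of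
`X`, `A` and `A†` just swaps the two terms of `J`. -/

open Matrix

lemma IsComplexPerm.mem_unitaryGroup {k : ℕ} {P : Matrix (Fin k) (Fin k) ℂ}
    (hP : IsComplexPerm P) : P ∈ unitaryGroup (Fin k) ℂ := by
  obtain ⟨π, d, hd, rfl⟩ := hP
  rw [mem_unitaryGroup_iff, star_eq_conjTranspose]
  ext i j
  by_cases hij : i = j
  · subst hij
    simp [mul_apply, RCLike.star_def, Complex.mul_conj', hd]
  · simp [mul_apply, hij]

lemma smul_mem_unitaryGroup_of_norm_eq_one {k : ℕ} {U : Matrix (Fin k) (Fin k) ℂ}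
    (hU : U ∈ unitaryGroup (Fin k) ℂ) {α : ℂ} (hα : ‖α‖ = 1) : α • U ∈ unitaryGroup (Fin k) ℂ :=
  Unitary.smul_mem_of_mem (by
    rw [Unitary.mem_iff_star_mul_self, RCLike.star_def, Complex.conj_mul', hα]; simp) hU

namespace IsMPInv

variable {m n : ℕ} {A : Matrix (Fin m) (Fin n) ℂ} {B C : Matrix (Fin n) (Fin m) ℂ}

lemma unique (hB : IsMPInv A B) (hC : IsMPInv A C) : B = C := by
  obtain ⟨b1, b2, b3, b4⟩ := hB
  obtain ⟨c1, c2, c3, c4⟩ := hC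
  have hAB : A * B = A * C :=
    calc A * B = (A * C * (A * B))ᴴ := by rw [← Matrix.mul_assoc, c1, b3]
      _ = A * B * (A * C) := by rw [conjTranspose_mul, b3, c3]
      _ = A * C := by rw [← Matrix.mul_assoc, b1]
  have hBA : B * A = C * A :=
    calc B * A = (B * A * (C * A))ᴴ := by rw [Matrix.mul_assoc, ← Matrix.mul_assoc A, c1, b4]
      _ = C * A * (B * A) := by rw [conjTranspose_mul, b4, c4]
      _ = C * A := by rw [Matrix.mul_assoc, ← Matrix.mul_assoc A, b1]
  calc B = B * A * B := b2.symm
    _ = C * A * C := by rw [hBA, Matrix.mul_assoc, hAB, ← Matrix.mul_assoc]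
    _ = C := c2

lemma conjTranspose (h : IsMPInv A B) : IsMPInv Aᴴ Bᴴ := by
  obtain ⟨h1, h2, h3, h4⟩ := h
  refine ⟨?_, ?_, ?_, ?_⟩
  · rw [← conjTranspose_mul, ← conjTranspose_mul, ← Matrix.mul_assoc, h1]
  · rw [← conjTranspose_mul, ← conjTranspose_mul, ← Matrix.mul_assoc, h2]
  · rw [← conjTranspose_mul, h4, h4]
  · rw [← conjTranspose_mul, h3, h3]

lemma transpose (h : IsMPInv A B) : IsMPInv Aᵀ Bᵀ := by
  obtain ⟨h1, h2, h3, h4⟩ := h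
  refine ⟨?_, ?_, ?_, ?_⟩
  · rw [← transpose_mul, ← transpose_mul, ← Matrix.mul_assoc, h1]
  · rw [← transpose_mul, ← transpose_mul, ← Matrix.mul_assoc, h2]
  · rw [← transpose_mul, conjTranspose_transpose_eq_transpose_conjTranspose, h4]
  · rw [← transpose_mul, conjTranspose_transpose_eq_transpose_conjTranspose, h3]

lemma isometry_mul_mul {k l : ℕ} {U : Matrix (Fin k) (Fin m) ℂ} {V : Matrix (Fin n) (Fin l) ℂ}
    (hU : Uᴴ * U = 1) (hV : V * Vᴴ = 1) (h : IsMPInv A B) :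
    IsMPInv (U * A * V) (Vᴴ * B * Uᴴ) := by
  obtain ⟨h1, h2, h3, h4⟩ := h
  have cancelU : ∀ {p : ℕ} (Z : Matrix (Fin m) (Fin p) ℂ), Uᴴ * (U * Z) = Z := fun Z => by
    rw [← Matrix.mul_assoc, hU, Matrix.one_mul]
  have cancelV : ∀ {p : ℕ} (Z : Matrix (Fin n) (Fin p) ℂ), V * (Vᴴ * Z) = Z := fun Z => by
    rw [← Matrix.mul_assoc, hV, Matrix.one_mul]
  have hAB : U * A * V * (Vᴴ * B * Uᴴ) = U * (A * B) * Uᴴ := by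
    simp only [Matrix.mul_assoc, cancelV]
  have hBA : Vᴴ * B * Uᴴ * (U * A * V) = Vᴴ * (B * A) * V := by
    simp only [Matrix.mul_assoc, cancelU]
  refine ⟨?_, ?_, ?_, ?_⟩
  · rw [hAB]
    conv_rhs => rw [← h1]
    simp only [Matrix.mul_assoc, cancelU]
  · rw [hBA]
    conv_rhs => rw [← h2]
    simp only [Matrix.mul_assoc, cancelV]
  · rw [hAB, conjTranspose_mul, conjTranspose_mul, conjTranspose_conjTranspose, h3]
    exact (Matrix.mul_assoc _ _ _).symm
  · rw [hBA, conjTranspose_mul, conjTranspose_mul, conjTranspose_conjTranspose, h4]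
    exact (Matrix.mul_assoc _ _ _).symm

end IsMPInv

section Frobenius

variable {m n k : ℕ}

lemma frobSq_eq_re_trace (M : Matrix (Fin m) (Fin n) ℂ) : frobSq M = (trace (Mᴴ * M)).re := by
  simp only [frobSq, trace, diag_apply, mul_apply, conjTranspose_apply, Complex.re_sum]
  rw [Finset.sum_comm]
  refine Finset.sum_congr rfl fun i _ => Finset.sum_congr rfl fun j _ => ?_
  rw [RCLike.star_def, Complex.conj_mul']
  norm_cast

lemma frobSq_conjTranspose (M : Matrix (Fin m) (Fin n) ℂ) : frobSq Mᴴ = frobSq M := by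
  rw [frobSq, Finset.sum_comm]
  simp [frobSq]

lemma frobSq_transpose (M : Matrix (Fin m) (Fin n) ℂ) : frobSq Mᵀ = frobSq M := by
  rw [frobSq, Finset.sum_comm]
  simp [frobSq]

lemma frobSq_isometry_mul {U : Matrix (Fin k) (Fin m) ℂ} (hU : Uᴴ * U = 1)
    (M : Matrix (Fin m) (Fin n) ℂ) : frobSq (U * M) = frobSq M := by
  rw [frobSq_eq_re_trace, frobSq_eq_re_trace, conjTranspose_mul, Matrix.mul_assoc,
    ← Matrix.mul_assoc Uᴴ, hU, Matrix.one_mul]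

lemma frobSq_mul_coisometry {V : Matrix (Fin n) (Fin k) ℂ} (hV : V * Vᴴ = 1)
    (M : Matrix (Fin m) (Fin n) ℂ) : frobSq (M * V) = frobSq M := by
  rw [← frobSq_conjTranspose, conjTranspose_mul,
    frobSq_isometry_mul (by rwa [conjTranspose_conjTranspose]), frobSq_conjTranspose]

end Frobenius

section Misfit

variable {m n k l : ℕ} (X A : Matrix (Fin m) (Fin n) ℂ) (B : Matrix (Fin n) (Fin m) ℂ)

lemma Jmis_conjTranspose : Jmis Xᴴ Aᴴ Bᴴ = Jmis X A B := by
  rw [Jmis, Jmis, ← conjTranspose_sub, ← conjTranspose_mul, ← conjTranspose_mul,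
    frobSq_conjTranspose, frobSq_conjTranspose, add_comm]

lemma Jmis_transpose : Jmis Xᵀ Aᵀ Bᵀ = Jmis X A B := by
  rw [Jmis, Jmis, ← transpose_sub, ← transpose_mul, ← transpose_mul,
    frobSq_transpose, frobSq_transpose, add_comm]

lemma Jmis_isometry_mul_mul {U : Matrix (Fin k) (Fin m) ℂ} {V : Matrix (Fin n) (Fin l) ℂ}
    (hU : Uᴴ * U = 1) (hV : V * Vᴴ = 1) :
    Jmis (U * X * V) (U * A * V) (Vᴴ * B * Uᴴ) = Jmis X A B := by
  have hU' : Uᴴ * Uᴴᴴ = 1 := by rwa [conjTranspose_conjTranspose]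
  have hV' : Vᴴᴴ * Vᴴ = 1 := by rwa [conjTranspose_conjTranspose]
  have hsub : U * X * V - U * A * V = U * (X - A) * V := by
    rw [← Matrix.sub_mul, ← Matrix.mul_sub]
  have hright : U * (X - A) * V * (Vᴴ * B * Uᴴ) = U * ((X - A) * B) * Uᴴ := by
    simp only [Matrix.mul_assoc, ← Matrix.mul_assoc V Vᴴ, hV, Matrix.one_mul]
  have hleft : Vᴴ * B * Uᴴ * (U * (X - A) * V) = Vᴴ * (B * (X - A)) * V := by
    simp only [Matrix.mul_assoc, ← Matrix.mul_assoc Uᴴ U, hU, Matrix.one_mul]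
  rw [Jmis, Jmis, hsub, hright, hleft, frobSq_mul_coisometry hU', frobSq_isometry_mul hU,
    frobSq_mul_coisometry hV, frobSq_isometry_mul hV']

end Misfit

lemma Jmis_smul_mul_mul_of_isComplexPerm {m n : ℕ} {A X : Matrix (Fin m) (Fin n) ℂ}
    {Ad B : Matrix (Fin n) (Fin m) ℂ} {α : ℂ} {P : Matrix (Fin m) (Fin m) ℂ}
    {Q : Matrix (Fin n) (Fin n) ℂ} (hMP : IsMPInv A Ad) (hα : ‖α‖ = 1) (hP : IsComplexPerm P)
    (hQ : IsComplexPerm Q) (hB : IsMPInv (α • (P * A * Q)) B) :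
    Jmis (α • (P * X * Q)) (α • (P * A * Q)) B = Jmis X A Ad := by
  have hU : (α • P)ᴴ * (α • P) = 1 :=
    mem_unitaryGroup_iff'.mp (smul_mem_unitaryGroup_of_norm_eq_one hP.mem_unitaryGroup hα)
  have hV : Q * Qᴴ = 1 := mem_unitaryGroup_iff.mp hQ.mem_unitaryGroup
  simp only [← smul_mul] at hB ⊢
  have hBeq := hB.unique (hMP.isometry_mul_mul hU hV)
  subst hBeq
  exact Jmis_isometry_mul_mul X A Ad hU hV

/-- the misfit is invariant under `Y ↦ α P Y^{op} Q` for `|α| = 1` and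
complex permutation matrices `P, Q`, where `op` is the identity, conjugate transpose,
or transpose. -/
theorem stmt15 {m n : ℕ} (A X : Matrix (Fin m) (Fin n) ℂ) (Ad : Matrix (Fin n) (Fin m) ℂ)
    (hMP : IsMPInv A Ad) (α : ℂ) (hα : ‖α‖ = 1) :
    (∀ (P : Matrix (Fin m) (Fin m) ℂ) (Q : Matrix (Fin n) (Fin n) ℂ),
      IsComplexPerm P → IsComplexPerm Q →
      ∀ B : Matrix (Fin n) (Fin m) ℂ, IsMPInv (α • (P * A * Q)) B →
        Jmis (α • (P * X * Q)) (α • (P * A * Q)) B = Jmis X A Ad) ∧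
    (∀ (P : Matrix (Fin n) (Fin n) ℂ) (Q : Matrix (Fin m) (Fin m) ℂ),
      IsComplexPerm P → IsComplexPerm Q →
      ∀ B : Matrix (Fin m) (Fin n) ℂ, IsMPInv (α • (P * Aᴴ * Q)) B →
        Jmis (α • (P * Xᴴ * Q)) (α • (P * Aᴴ * Q)) B = Jmis X A Ad) ∧
    (∀ (P : Matrix (Fin n) (Fin n) ℂ) (Q : Matrix (Fin m) (Fin m) ℂ),
      IsComplexPerm P → IsComplexPerm Q →
      ∀ B : Matrix (Fin m) (Fin n) ℂ, IsMPInv (α • (P * Aᵀ * Q)) B →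
        Jmis (α • (P * Xᵀ * Q)) (α • (P * Aᵀ * Q)) B = Jmis X A Ad) := by
  refine ⟨fun P Q hP hQ B hB => ?_, fun P Q hP hQ B hB => ?_, fun P Q hP hQ B hB => ?_⟩
  · exact Jmis_smul_mul_mul_of_isComplexPerm hMP hα hP hQ hB
  · rw [Jmis_smul_mul_mul_of_isComplexPerm hMP.conjTranspose hα hP hQ hB, Jmis_conjTranspose]
  · rw [Jmis_smul_mul_mul_of_isComplexPerm hMP.transpose hα hP hQ hB, Jmis_transpose]
end
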